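/- Let θ ∈ (3/2, 2], let U be uniform on [0, ln 2], and define Y = 2/(θ·e^U) for U ∈ [0, ln(2/θ)], Y = 3/(θ·e^U) for U ∈ (ln(2/θ), ln(3/θ)], and Y = 4/(θ·e^U) for U ∈ (ln(3/θ), ln 2]. Then E[Y] = 5/(6·ln 2). -/

import Mathlib

/-!
On each of the three pieces the integrand is `(c / θ) e^{-u}`, and the breakpoints
`log (2/θ)`, `log (3/θ)` are exactly where `e^{-u}` equals `θ/2` and `θ/3`. Hence the integral is
`2/θ (1 - θ/2) + 3/θ (θ/2 - θ/3) + 4/θ (θ/3 - 1/2) = 5/6`, the terms in `θ` cancelling.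
-/

open MeasureTheory intervalIntegral Real Set
open scoped Interval

section PiecewiseIntegral

variable {E : Type*} {f g : ℝ → E} {x a y : ℝ}

lemma eqOn_ite_le_left (hxa : x ≤ a) :
    EqOn f (fun u => if u ≤ a then f u else g u) (Ι x a) := by
  intro u hu
  rw [uIoc_of_le hxa] at hu
  simp [hu.2]

lemma eqOn_ite_le_right (hay : a ≤ y) :
    EqOn g (fun u => if u ≤ a then f u else g u) (Ι a y) := by
  intro u hu
  rw [uIoc_of_le hay] at hu
  simp [not_le.mpr hu.1]

variable [NormedAddCommGroup E]

lemma IntervalIntegrable.ite_le (hxa : x ≤ a) (hay : a ≤ y)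
    (hf : IntervalIntegrable f volume x a) (hg : IntervalIntegrable g volume a y) :
    IntervalIntegrable (fun u => if u ≤ a then f u else g u) volume x y :=
  (hf.congr (eqOn_ite_le_left hxa)).trans (hg.congr (eqOn_ite_le_right hay))

variable [NormedSpace ℝ E]

lemma intervalIntegral.integral_ite_le_eq_add (hxa : x ≤ a) (hay : a ≤ y)
    (hf : IntervalIntegrable f volume x a) (hg : IntervalIntegrable g volume a y) :
    ∫ u in x..y, (if u ≤ a then f u else g u) = (∫ u in x..a, f u) + ∫ u in a..y, g u := by
  rw [← integral_add_adjacent_intervals (hf.congr (eqOn_ite_le_left hxa))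
      (hg.congr (eqOn_ite_le_right hay)),
    integral_congr_ae (.of_forall fun u hu => (eqOn_ite_le_left hxa hu).symm),
    integral_congr_ae (.of_forall fun u hu => (eqOn_ite_le_right hay hu).symm)]

end PiecewiseIntegral

lemma div_mul_exp_eq (c θ u : ℝ) : c / (θ * exp u) = c / θ * exp (-u) := by
  rw [exp_neg, div_mul_eq_div_div, div_eq_mul_inv]

lemma integral_div_mul_exp (c θ x y : ℝ) :
    ∫ u in x..y, c / (θ * exp u) = c / θ * (exp (-x) - exp (-y)) := by
  simp_rw [div_mul_exp_eq, intervalIntegral.integral_const_mul,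
    integral_comp_neg (fun u => exp u), integral_exp]

lemma intervalIntegrable_div_mul_exp (c θ x y : ℝ) :
    IntervalIntegrable (fun u => c / (θ * exp u)) volume x y :=
  Continuous.intervalIntegrable (by simp_rw [div_mul_exp_eq]; fun_prop) x y

theorem stmt_16 (θ : ℝ) (hθ : θ ∈ Set.Ioc (3 / 2 : ℝ) 2) :
    (∫ u in (0:ℝ)..(Real.log 2),
        if u ≤ Real.log (2 / θ) then 2 / (θ * Real.exp u)
        else if u ≤ Real.log (3 / θ) then 3 / (θ * Real.exp u)
        else 4 / (θ * Real.exp u)) / Real.log 2 =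
      5 / (6 * Real.log 2) := by
  obtain ⟨hθ₁, hθ₂⟩ := hθ
  have hθ₀ : 0 < θ := by linarith
  have h₀ : 0 ≤ log (2 / θ) := log_nonneg (by rw [le_div_iff₀ hθ₀]; linarith)
  have h₁ : log (2 / θ) ≤ log (3 / θ) := log_le_log (by positivity) (by gcongr; norm_num)
  have h₂ : log (3 / θ) ≤ log 2 := log_le_log (by positivity) (by rw [div_le_iff₀ hθ₀]; linarith)
  have hexp_neg_log : ∀ c : ℝ, 0 < c → exp (-log (c / θ)) = θ / c := fun c hc => by
    rw [exp_neg, exp_log (by positivity), inv_div]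
  have hintegrable := intervalIntegrable_div_mul_exp (θ := θ)
  rw [integral_ite_le_eq_add h₀ (h₁.trans h₂) (hintegrable ..)
      ((hintegrable ..).ite_le h₁ h₂ (hintegrable ..)),
    integral_ite_le_eq_add h₁ h₂ (hintegrable ..) (hintegrable ..)]
  simp only [integral_div_mul_exp, hexp_neg_log 2 two_pos, hexp_neg_log 3 three_pos,
    neg_zero, exp_zero, exp_neg, exp_log two_pos]
  field_simp
  ring
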